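/- arXiv:1612.08887 — 2 statements merged into one kernel-verified Lean document; each statement's English description precedes it below -/
import Mathlib

section
/- Recurrence for generating series, positive part (Lemma 4.6(1), in cleared-denominator form). Let n ≥ 1 and let k < 0 be an integer. Then in the formal power series ring R_{n+1}[[T]] one has (1 − t_{n+1}^k T) · Σ_{m≥0} χ_{n,−km} T^m = Σ_{m≥0} χ_{n−1,−km} T^m + Σ_{j=1}^{|k|−1} t_{n+1}^{k+j} T · ( Σ_{m≥0} χ_{n−1,−km+j} T^m ) (for k = −1 the last sum is empty). -/
open Finset

noncomputable section

/-- The Laurent polynomial `χ_{n,l}` of the paper, with `m = n + 1` variables, interpreted at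
units `t 0, …, t (m-1)` of a commutative ring `A`.  For `l ≥ 0` it is the sum of all monomials
`t₁^{-r₁} ⋯ t_m^{-r_m}` with `r₁ + ⋯ + r_m = l`; it vanishes for `-m < l < 0`; and for
`l ≤ -m` it is `(-1)^(m-1) t₁⋯t_m` times the sum of all monomials of degree `-l - m`. -/
def chi {A : Type*} [CommRing A] (m : ℕ) (t : Fin m → Aˣ) (l : ℤ) : A :=
  if 0 ≤ l then
    ∑ r ∈ Finset.Nat.antidiagonalTuple m l.toNat, ∏ i, (((t i)⁻¹ : Aˣ) : A) ^ r i
  else if -(m : ℤ) < l then 0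
  else (-1 : A) ^ (m + 1) * (∏ i, ((t i : Aˣ) : A)) *
    ∑ r ∈ Finset.Nat.antidiagonalTuple m (-l - m).toNat, ∏ i, ((t i : Aˣ) : A) ^ r i

/-- The `d`-th elementary symmetric polynomial evaluated at `f 0, …, f (m-1)` (with `esymm m f 0 = 1`). -/
def esymm {A : Type*} [CommRing A] (m : ℕ) (f : Fin m → A) (d : ℕ) : A :=
  ∑ s ∈ Finset.powersetCard d (Finset.univ : Finset (Fin m)), ∏ i ∈ s, f i

/-- The family `t₁^k, …, t_m^k`. -/
def tk {A : Type*} [CommRing A] {m : ℕ} (t : Fin m → Aˣ) (k : ℤ) : Fin m → A :=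
  fun i => ((t i ^ k : Aˣ) : A)

/-- The coefficient of `T^l` in the polynomial `B_{n,k}^j` of the paper (with `m = n + 1`):
`Σ_{i=1}^{m-l} (-1)^{i+l+1} χ_{n, ik+j} s_{i+l}(t₁^k, …, t_m^k)`. -/
def Bcoeff {A : Type*} [CommRing A] (m : ℕ) (t : Fin m → Aˣ) (k j : ℤ) (l : ℕ) : A :=
  ∑ i ∈ Finset.Icc 1 (m - l),
    (-1 : A) ^ (i + l + 1) * chi m t ((i : ℤ) * k + j) * esymm m (tk t k) (i + l)

/-- The polynomial `B_{n,k}^j = Σ_{l=0}^{n} Bcoeff l · T^l` of the paper (with `m = n + 1`). -/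
def Bpoly {A : Type*} [CommRing A] (m : ℕ) (t : Fin m → Aˣ) (k j : ℤ) : Polynomial A :=
  ∑ l ∈ Finset.range m, Polynomial.C (Bcoeff m t k j l) * Polynomial.X ^ l


section AuxiliaryLemmas

variable {A : Type*} [CommRing A]

lemma sum_antidiagonalTuple_succ {M : Type*} [AddCommMonoid M] (m l : ℕ)
    (f : (Fin (m + 1) → ℕ) → M) :
    ∑ x ∈ Finset.Nat.antidiagonalTuple (m + 1) l, f x =
      ∑ r ∈ Finset.range (l + 1), ∑ y ∈ Finset.Nat.antidiagonalTuple m (l - r),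
        f (Fin.snoc y r) := by
  rw [Finset.sum_sigma']
  refine Finset.sum_nbij' (fun x => ⟨x (Fin.last m), Fin.init x⟩)
    (fun p => Fin.snoc p.2 p.1) ?_ ?_ ?_ ?_ ?_
  · intro x hx
    rw [Finset.Nat.mem_antidiagonalTuple, Fin.sum_univ_castSucc] at hx
    refine Finset.mem_sigma.2 ⟨Finset.mem_range.2 ?_, ?_⟩
    · dsimp only
      omega
    · rw [Finset.Nat.mem_antidiagonalTuple]
      simp only [Fin.init]
      omega
  · rintro ⟨r, y⟩ hp
    rw [Finset.mem_sigma, Finset.mem_range] at hp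
    obtain ⟨hr, hy⟩ := hp
    dsimp only at hr hy ⊢
    rw [Finset.Nat.mem_antidiagonalTuple] at hy ⊢
    rw [Fin.sum_univ_castSucc]
    simp only [Fin.snoc_castSucc, Fin.snoc_last]
    omega
  · intro x _
    exact Fin.snoc_init_self x
  · rintro ⟨r, y⟩ _
    simp
  · intro x _
    rw [Fin.snoc_init_self]

lemma chi_natCast (m : ℕ) (t : Fin m → Aˣ) (l : ℕ) :
    chi m t (l : ℤ) =
      ∑ r ∈ Finset.Nat.antidiagonalTuple m l, ∏ i, (((t i)⁻¹ : Aˣ) : A) ^ r i := by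
  simp [chi]

lemma chi_zero (m : ℕ) (t : Fin m → Aˣ) : chi m t 0 = 1 := by
  have := chi_natCast m t 0
  simpa [Finset.Nat.antidiagonalTuple_zero_right] using this

lemma chi_decomp (m l : ℕ) (t : Fin (m + 1) → Aˣ) :
    chi (m + 1) t (l : ℤ) =
      ∑ r ∈ Finset.range (l + 1),
        (((t (Fin.last m))⁻¹ : Aˣ) : A) ^ r *
          chi m (t ∘ Fin.castSucc) ((l - r : ℕ) : ℤ) := by
  rw [chi_natCast, sum_antidiagonalTuple_succ]
  refine Finset.sum_congr rfl fun r hr => ?_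
  rw [chi_natCast, Finset.mul_sum]
  refine Finset.sum_congr rfl fun y hy => ?_
  rw [Fin.prod_univ_castSucc]
  simp only [Fin.snoc_castSucc, Fin.snoc_last, Function.comp_apply]
  ring

lemma chi_key (m q : ℕ) (hq : 1 ≤ q) (t : Fin (m + 1) → Aˣ) (M : ℕ) :
    chi (m + 1) t ((q * (M + 1) : ℕ) : ℤ) =
      chi m (t ∘ Fin.castSucc) ((q * (M + 1) : ℕ) : ℤ) +
        (((t (Fin.last m))⁻¹ : Aˣ) : A) ^ q * chi (m + 1) t ((q * M : ℕ) : ℤ) +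
        ∑ j ∈ Finset.Icc 1 (q - 1),
          (((t (Fin.last m))⁻¹ : Aˣ) : A) ^ (q - j) *
            chi m (t ∘ Fin.castSucc) ((q * M + j : ℕ) : ℤ) := by
  set u : A := (((t (Fin.last m))⁻¹ : Aˣ) : A) with hu
  rw [chi_decomp]
  have hsplit : q * (M + 1) + 1 = q + (q * M + 1) := by ring
  rw [hsplit, Finset.sum_range_add]
  have h2 : ∑ x ∈ Finset.range (q * M + 1),
      u ^ (q + x) * chi m (t ∘ Fin.castSucc) ((q * (M + 1) - (q + x) : ℕ) : ℤ) =
      u ^ q * chi (m + 1) t ((q * M : ℕ) : ℤ) := by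
    rw [chi_decomp, Finset.mul_sum]
    refine Finset.sum_congr rfl fun x hx => ?_
    rw [Finset.mem_range] at hx
    have : q * (M + 1) - (q + x) = q * M - x := by
      have : q * (M + 1) = q * M + q := by ring
      omega
    rw [this, pow_add]
    ring
  rw [h2]
  have h1 : ∑ x ∈ Finset.range q,
      u ^ x * chi m (t ∘ Fin.castSucc) ((q * (M + 1) - x : ℕ) : ℤ) =
      chi m (t ∘ Fin.castSucc) ((q * (M + 1) : ℕ) : ℤ) +
      ∑ j ∈ Finset.Icc 1 (q - 1),
        u ^ (q - j) * chi m (t ∘ Fin.castSucc) ((q * M + j : ℕ) : ℤ) := by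
    rw [Finset.range_eq_Ico, Finset.sum_eq_sum_Ico_succ_bot hq]
    simp only [pow_zero, one_mul, Nat.sub_zero]
    congr 1
    refine Finset.sum_nbij' (fun r => q - r) (fun j => q - j) ?_ ?_ ?_ ?_ ?_
    · intro r hr
      rw [Finset.mem_Ico] at hr
      rw [Finset.mem_Icc]
      omega
    · intro j hj
      rw [Finset.mem_Icc] at hj
      rw [Finset.mem_Ico]
      omega
    · intro r hr; rw [Finset.mem_Ico] at hr; omega
    · intro j hj; rw [Finset.mem_Icc] at hj; omega
    · intro r hr
      rw [Finset.mem_Ico] at hr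
      have e1 : q - (q - r) = r := by omega
      have e2 : q * M + (q - r) = q * (M + 1) - r := by
        have : q * (M + 1) = q * M + q := by ring
        omega
      rw [e1, e2]
  rw [h1]
  ring

end AuxiliaryLemmas

/-- Lemma 4.6(1) of the paper, in cleared-denominator form.  For `n ≥ 1`
and `k < 0`, in `R_{n+1}[[T]]` one has
`(1 - t_{n+1}^k T) · Σ_{m≥0} χ_{n,-km} T^m
  = Σ_{m≥0} χ_{n-1,-km} T^m + Σ_{j=1}^{|k|-1} t_{n+1}^{k+j} T · (Σ_{m≥0} χ_{n-1,-km+j} T^m)`. -/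
theorem generating_series_recurrence_positive {A : Type*} [CommRing A]
    (n : ℕ) (hn : 1 ≤ n) (k : ℤ) (hk : k < 0) (t : Fin (n + 1) → Aˣ) :
    (1 - PowerSeries.C ((t (Fin.last n) ^ k : Aˣ) : A) * PowerSeries.X) *
        PowerSeries.mk (fun m => chi (n + 1) t (-k * (m : ℤ))) =
      PowerSeries.mk (fun m => chi n (t ∘ Fin.castSucc) (-k * (m : ℤ))) +
        ∑ j ∈ Finset.Icc 1 (k.natAbs - 1),
          PowerSeries.C ((t (Fin.last n) ^ (k + (j : ℤ)) : Aˣ) : A) * PowerSeries.X *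
            PowerSeries.mk (fun m => chi n (t ∘ Fin.castSucc) (-k * (m : ℤ) + j)) := by
  set q : ℕ := k.natAbs with hqdef
  have hkq : k = -(q : ℤ) := by
    rw [hqdef]; omega
  have hq : 1 ≤ q := by omega
  set t0 : Aˣ := t (Fin.last n) with ht0
  set u : A := ((t0⁻¹ : Aˣ) : A) with hu
  have hpow : ∀ c : ℕ, ((t0 ^ (-(c : ℤ)) : Aˣ) : A) = u ^ c := by
    intro c
    rw [zpow_neg, zpow_natCast, ← inv_pow, hu, Units.val_pow_eq_pow_val]
  have hcast : ∀ m : ℕ, -k * (m : ℤ) = ((q * m : ℕ) : ℤ) := by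
    intro m; rw [hkq]; push_cast; ring
  refine PowerSeries.ext fun N => ?_
  rw [sub_mul, one_mul, map_sub, map_add, map_sum, mul_assoc, PowerSeries.coeff_C_mul]
  simp only [mul_assoc, PowerSeries.coeff_C_mul, PowerSeries.coeff_mk]
  cases N with
  | zero =>
    simp only [PowerSeries.coeff_zero_X_mul, mul_zero, sub_zero, Finset.sum_const_zero]
    norm_num [chi_zero]
  | succ M =>
    simp only [PowerSeries.coeff_succ_X_mul, PowerSeries.coeff_mk]
    have ha : ((t0 ^ k : Aˣ) : A) = u ^ q := by rw [hkq]; exact hpow q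
    have hM1 : -k * ((M + 1 : ℕ) : ℤ) = ((q * (M + 1) : ℕ) : ℤ) := hcast (M + 1)
    have hM : -k * ((M : ℕ) : ℤ) = ((q * M : ℕ) : ℤ) := hcast M
    rw [ha, hM1, hM, chi_key n q hq t M]
    have hsum : ∀ j ∈ Finset.Icc 1 (q - 1),
        ((t0 ^ (k + (j : ℤ)) : Aˣ) : A) * chi n (t ∘ Fin.castSucc) (((q * M : ℕ) : ℤ) + j) =
        u ^ (q - j) * chi n (t ∘ Fin.castSucc) ((q * M + j : ℕ) : ℤ) := by
      intro j hj
      rw [Finset.mem_Icc] at hj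
      have h1 : k + (j : ℤ) = -(((q - j : ℕ) : ℤ)) := by
        rw [hkq]; push_cast; omega
      have h2 : ((q * M : ℕ) : ℤ) + j = ((q * M + j : ℕ) : ℤ) := by
        push_cast; ring
      rw [h1, hpow, h2]
    rw [Finset.sum_congr rfl hsum]
    ring
end
end

section
/- Alternative expression for B (Remark 4.10 of the paper). For all integers n ≥ 0, k ∈ ℤ, j ∈ ℤ and every integer l with 0 ≤ l ≤ n, one has Σ_{i=1}^{n+1−l} (−1)^{i+l+1} χ_{n,ik+j} · s_{i+l}(t₁^k, …, t_{n+1}^k) = Σ_{α=0}^{l} (−1)^{α} χ_{n,(α−l)k+j} · s_{α}(t₁^k, …, t_{n+1}^k) in R_{n+1}. -/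
open Finset

noncomputable section

/-! ### Auxiliary machinery -/

section Aux
variable {A : Type*} [CommRing A]

/-- Complete homogeneous sums. -/
def hseq (m : ℕ) (x : Fin m → A) (d : ℕ) : A :=
  ∑ r ∈ Finset.Nat.antidiagonalTuple m d, ∏ i, x i ^ r i

theorem chi_def' (m : ℕ) (t : Fin m → Aˣ) (l : ℤ) :
    chi m t l = if 0 ≤ l then hseq m (fun i => (((t i)⁻¹ : Aˣ) : A)) l.toNat
      else if -(m : ℤ) < l then 0
      else (-1 : A) ^ (m + 1) * (∏ i, ((t i : Aˣ) : A)) *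
        hseq m (fun i => ((t i : Aˣ) : A)) (-l - m).toNat := rfl

theorem sum_adT_succ {M : Type*} [AddCommMonoid M] (k n : ℕ) (f : (Fin (k+1) → ℕ) → M) :
    ∑ r ∈ Finset.Nat.antidiagonalTuple (k+1) n, f r
      = ∑ p ∈ Finset.HasAntidiagonal.antidiagonal n, ∑ x ∈ Finset.Nat.antidiagonalTuple k p.2,
          f (Fin.cons p.1 x) := by
  rw [← Finset.sum_sigma (s := Finset.HasAntidiagonal.antidiagonal n)
    (t := fun p => Finset.Nat.antidiagonalTuple k p.2)
    (f := fun q => f (Fin.cons q.1.1 q.2))]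
  apply Finset.sum_nbij' (i := fun r => ⟨(r 0, ∑ i, Fin.tail r i), Fin.tail r⟩)
    (j := fun q => Fin.cons q.1.1 q.2)
  · intro r hr
    rw [Finset.Nat.mem_antidiagonalTuple] at hr
    refine Finset.mem_sigma.2 ⟨Finset.HasAntidiagonal.mem_antidiagonal.2 ?_, Finset.Nat.mem_antidiagonalTuple.2 rfl⟩
    rw [← hr, Fin.sum_univ_succ]; rfl
  · rintro ⟨⟨p1, p2⟩, x⟩ hq
    simp only [Finset.mem_sigma, Finset.Nat.mem_antidiagonalTuple, Finset.HasAntidiagonal.mem_antidiagonal] at hq ⊢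
    rw [Fin.sum_cons, hq.2]; exact hq.1
  · intro r _; exact Fin.cons_self_tail r
  · rintro ⟨⟨p1, p2⟩, x⟩ hq
    simp only [Finset.mem_sigma, Finset.Nat.mem_antidiagonalTuple, Finset.HasAntidiagonal.mem_antidiagonal] at hq
    simp [Fin.tail_cons, hq.2]
  · intro r _; exact congrArg f (Fin.cons_self_tail r).symm

@[simp] theorem hseq_zero (m : ℕ) (x : Fin m → A) : hseq m x 0 = 1 := by
  rw [hseq, Finset.Nat.antidiagonalTuple_zero_right, Finset.sum_singleton]
  simp

theorem hseq_expand (k n : ℕ) (x : Fin (k+1) → A) :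
    hseq (k+1) x n = ∑ p ∈ Finset.HasAntidiagonal.antidiagonal n, x 0 ^ p.1 * hseq k (fun i => x i.succ) p.2 := by
  rw [hseq, sum_adT_succ]
  refine Finset.sum_congr rfl fun p _ => ?_
  rw [hseq, Finset.mul_sum]
  refine Finset.sum_congr rfl fun r _ => ?_
  rw [Fin.prod_univ_succ]
  simp [Fin.cons_zero, Fin.cons_succ]

theorem hseq_rec (k n : ℕ) (x : Fin (k+1) → A) :
    hseq (k+1) x (n+1) = x 0 * hseq (k+1) x n + hseq k (fun i => x i.succ) (n+1) := by
  rw [hseq_expand, hseq_expand, Finset.Nat.sum_antidiagonal_succ]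
  rw [pow_zero, one_mul, Finset.mul_sum]
  rw [add_comm]
  congr 1
  refine Finset.sum_congr rfl fun p _ => ?_
  ring

theorem hseq_one (x : Fin 1 → A) (d : ℕ) : hseq 1 x d = x 0 ^ d := by
  rw [hseq, Finset.Nat.antidiagonalTuple_one, Finset.sum_singleton, Fin.prod_univ_one]
  rfl

theorem chi_one (t : Fin 1 → Aˣ) (l : ℤ) : chi 1 t l = ((t 0 ^ (-l) : Aˣ) : A) := by
  rw [chi_def']
  by_cases h : 0 ≤ l
  · rw [if_pos h, hseq_one, ← Units.val_pow_eq_pow_val]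
    congr 1
    rw [inv_pow, ← zpow_natCast, Int.toNat_of_nonneg h, zpow_neg]
  · rw [if_neg h, if_neg (by push_cast; omega), hseq_one, Fin.prod_univ_one]
    have h2 : ((-1:A))^(1+1) = 1 := by norm_num
    rw [h2, one_mul, ← Units.val_pow_eq_pow_val, ← Units.val_mul]
    congr 1
    rw [← zpow_natCast, Int.toNat_of_nonneg (by push_cast; omega), ← zpow_one_add]
    congr 1
    push_cast
    ring

theorem chi_rec (m : ℕ) (t : Fin (m+2) → Aˣ) (l : ℤ) :
    chi (m+2) t l = (((t 0)⁻¹ : Aˣ) : A) * chi (m+2) t (l-1)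
      + chi (m+1) (fun i => t i.succ) l := by
  have hinv : (((t 0)⁻¹ : Aˣ) : A) * ((t 0 : Aˣ) : A) = 1 := Units.inv_mul _
  have hp : (∏ i : Fin (m+2), ((t i : Aˣ) : A))
      = ((t 0 : Aˣ) : A) * ∏ i : Fin (m+1), ((t i.succ : Aˣ) : A) := Fin.prod_univ_succ _
  by_cases h1 : 1 ≤ l
  · have h0 : (0:ℤ) ≤ l := by omega
    have h0' : (0:ℤ) ≤ l - 1 := by omega
    have hnat : l.toNat = (l-1).toNat + 1 := by omega
    rw [chi_def', chi_def', chi_def', if_pos h0, if_pos h0', if_pos h0, hnat, hseq_rec]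
  · by_cases h2 : l = 0
    · subst h2
      rw [chi_def', chi_def', chi_def', if_pos le_rfl, if_pos le_rfl,
        if_neg (by omega), if_pos (by push_cast; omega)]
      simp [hseq_zero]
    · by_cases h3 : 2 - (m+2:ℤ) ≤ l
      · rw [chi_def', chi_def', chi_def', if_neg (by omega), if_pos (by push_cast; omega),
          if_neg (by omega), if_pos (by push_cast; omega),
          if_neg (by omega), if_pos (by push_cast; omega)]
        ring
      · by_cases h4 : l = 1 - (m+2:ℤ)
        · subst h4
          rw [chi_def', chi_def', chi_def', if_neg (by omega), if_pos (by push_cast; omega),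
            if_neg (by push_cast; omega), if_neg (by push_cast; omega),
            if_neg (by push_cast; omega), if_neg (by push_cast; omega)]
          have e1 : (-(1 - (m+2:ℤ) - 1) - (m+2:ℤ)).toNat = 0 := by push_cast; omega
          have e2 : (-(1 - (m+2:ℤ)) - (m+1:ℤ)).toNat = 0 := by push_cast; omega
          push_cast
          rw [e1, e2, hseq_zero, hseq_zero, hp]
          linear_combination (-(-1:A)^(m+3) * ∏ i : Fin (m+1), ((t i.succ : Aˣ) : A)) * hinv
        · have h5 : l ≤ -(m+2:ℤ) := by omega
          rw [chi_def', chi_def', chi_def', if_neg (by omega), if_neg (by push_cast; omega),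
            if_neg (by omega), if_neg (by push_cast; omega),
            if_neg (by omega), if_neg (by push_cast; omega)]
          have e1 : (-(l-1) - (m+2:ℤ)).toNat = (-l - (m+2:ℤ)).toNat + 1 := by push_cast; omega
          have e2 : (-l - (m+1:ℤ)).toNat = (-l - (m+2:ℤ)).toNat + 1 := by push_cast; omega
          push_cast
          rw [e1, e2, hseq_rec, hp]
          set H := hseq (m+2) (fun i => ((t i : Aˣ):A)) ((-l - (m+2:ℤ)).toNat) with hH
          set H' := hseq (m+1) (fun i => ((t i.succ : Aˣ):A)) ((-l - (m+2:ℤ)).toNat + 1) with hH'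
          linear_combination ((-1:A)^m * (∏ i : Fin (m+1), ((t i.succ : Aˣ) : A))
            * (((t 0 : Aˣ):A) * H + H')) * hinv

def el : List A → ℕ → A
  | _, 0 => 1
  | [], _ + 1 => 0
  | c :: L, a + 1 => el L (a + 1) + c * el L a

@[simp] theorem el_zero (L : List A) : el L 0 = 1 := by cases L <;> rfl

theorem el_cons_succ (c : A) (L : List A) (a : ℕ) :
    el (c :: L) (a + 1) = el L (a + 1) + c * el L a := rfl

theorem el_of_gt : ∀ (L : List A) (a : ℕ), L.length < a → el L a = 0
  | [], _ + 1, _ => rfl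
  | c :: L, a + 1, h => by
    rw [el_cons_succ, el_of_gt L (a + 1) (by simp at h; omega),
      el_of_gt L a (by simp at h; omega)]
    ring

theorem esymm_cons (c : A) (s : Multiset A) (d : ℕ) :
    (c ::ₘ s).esymm (d + 1) = s.esymm (d + 1) + c * s.esymm d := by
  rw [Multiset.esymm, Multiset.powersetCard_cons, Multiset.map_add, Multiset.sum_add]
  congr 1
  rw [Multiset.map_map, Function.comp_def]
  simp_rw [Multiset.prod_cons]
  rw [Multiset.esymm, ← Multiset.sum_map_mul_left]

theorem el_eq_esymm : ∀ (L : List A) (d : ℕ), el L d = Multiset.esymm (↑L) d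
  | L, 0 => by
    rw [el_zero, Multiset.esymm, Multiset.powersetCard_zero_left]
    simp
  | [], d + 1 => by
    rw [el_of_gt _ _ (by simp), Multiset.esymm]
    simp [Multiset.powersetCard_zero_right]
  | c :: L, d + 1 => by
    rw [el_cons_succ, el_eq_esymm L (d + 1), el_eq_esymm L d, ← Multiset.cons_coe, esymm_cons]

theorem esymm_eq_el (m : ℕ) (f : Fin m → A) (d : ℕ) :
    esymm m f d = el (List.ofFn f) d := by
  rw [el_eq_esymm, ← Fin.univ_val_map, Finset.esymm_map_val]
  rfl

theorem el_cons_sum (c : A) (E : List A) (w : ℤ → A) (p s : ℤ) :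
    ∑ a ∈ Finset.range (E.length + 2), (-1 : A) ^ a * el (c :: E) a * w (p + a * s)
      = ∑ a ∈ Finset.range (E.length + 1),
          (-1 : A) ^ a * el E a * (w (p + a * s) - c * w (p + a * s + s)) := by
  have hel : el E (E.length + 1) = 0 := el_of_gt _ _ (by omega)
  rw [Finset.sum_range_succ']
  have step : ∀ a ∈ Finset.range (E.length + 1),
      (-1 : A) ^ (a + 1) * el (c :: E) (a + 1) * w (p + (↑(a + 1) : ℤ) * s)
        = (-1 : A) ^ (a + 1) * el E (a + 1) * w (p + (↑(a + 1) : ℤ) * s)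
          + -((-1 : A) ^ a * el E a * (c * w (p + (a : ℤ) * s + s))) := by
    intro a _
    have hx : p + ((↑(a + 1) : ℤ)) * s = p + (a : ℤ) * s + s := by push_cast; ring
    rw [hx, el_cons_succ]
    ring
  rw [Finset.sum_congr rfl step, Finset.sum_add_distrib]
  simp_rw [mul_sub]
  rw [Finset.sum_sub_distrib]
  rw [Finset.sum_range_succ' (fun a => (-1 : A) ^ a * el E a * w (p + (a : ℤ) * s))]
  rw [Finset.sum_range_succ (fun a => (-1 : A) ^ (a + 1) * el E (a + 1) * w (p + (↑(a + 1) : ℤ) * s))]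
  rw [hel]
  simp only [el_zero, pow_zero, one_mul, mul_zero, zero_mul, add_zero, Nat.cast_zero, zero_mul]
  rw [Finset.sum_neg_distrib]
  ring

theorem lemA : ∀ (m : ℕ) (t : Fin (m + 1) → Aˣ) (l : ℤ),
    ∑ a ∈ Finset.range (m + 2),
      (-1 : A) ^ a * el (List.ofFn fun i => ((t i : Aˣ) : A)) a * chi (m + 1) t (l + a) = 0
  | 0, t, l => by
    rw [Finset.sum_range_succ, Finset.sum_range_one]
    have h0 : (List.ofFn fun i : Fin 1 => ((t i : Aˣ) : A)) = [((t 0 : Aˣ) : A)] := by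
      simp [List.ofFn_succ]
    rw [h0]
    have e1 : el [((t 0 : Aˣ) : A)] 1 = ((t 0 : Aˣ) : A) := by
      show (0 : A) + _ * 1 = _
      ring
    rw [e1, chi_one, chi_one]
    have : (t 0) * (t 0) ^ (-(l + (1:ℕ))) = (t 0) ^ (-(l + (0:ℕ))) := by
      rw [← zpow_one_add]
      congr 1
      push_cast
      ring
    have hv := congrArg (Units.val) this
    rw [Units.val_mul] at hv
    simp only [el, pow_zero, pow_one, one_mul]
    linear_combination -hv
  | m + 1, t, l => by
    have hlen : (List.ofFn fun i : Fin (m + 1) => ((t i.succ : Aˣ) : A)).length = m + 1 :=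
      List.length_ofFn
    have hofn : (List.ofFn fun i : Fin (m + 2) => ((t i : Aˣ) : A))
        = ((t 0 : Aˣ) : A) :: (List.ofFn fun i : Fin (m + 1) => ((t i.succ : Aˣ) : A)) := by
      rw [List.ofFn_succ]
    have key := el_cons_sum ((t 0 : Aˣ) : A)
      (List.ofFn fun i : Fin (m + 1) => ((t i.succ : Aˣ) : A)) (chi (m + 2) t) l 1
    simp only [mul_one, hlen] at key
    rw [hofn, key]
    have hrec : ∀ x : ℤ, chi (m + 2) t x - ((t 0 : Aˣ) : A) * chi (m + 2) t (x + 1)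
        = -((t 0 : Aˣ) : A) * chi (m + 1) (fun i => t i.succ) (x + 1) := by
      intro x
      have h := chi_rec m t (x + 1)
      have h2 : x + 1 - 1 = x := by ring
      rw [h2] at h
      have hmi : ((t 0 : Aˣ) : A) * (((t 0)⁻¹ : Aˣ) : A) = 1 := Units.mul_inv _
      linear_combination (-((t 0 : Aˣ) : A)) * h + (-(chi (m + 2) t x)) * hmi
    have step : ∀ a ∈ Finset.range (m + 2),
        (-1 : A) ^ a * el (List.ofFn fun i : Fin (m + 1) => ((t i.succ : Aˣ) : A)) a *
            (chi (m + 2) t (l + a) - ((t 0 : Aˣ) : A) * chi (m + 2) t (l + a + 1))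
          = (-((t 0 : Aˣ) : A)) * ((-1 : A) ^ a *
              el (List.ofFn fun i : Fin (m + 1) => ((t i.succ : Aˣ) : A)) a *
              chi (m + 1) (fun i => t i.succ) ((l + 1) + a)) := by
      intro a _
      have h3 : l + (a : ℤ) + 1 = (l + 1) + a := by ring
      rw [hrec (l + a), h3]
      ring
    rw [Finset.sum_congr rfl step, ← Finset.mul_sum, lemA m (fun i => t i.succ) (l + 1),
      mul_zero]

theorem tele_pos (c : Aˣ) (u : ℤ → A) (K : ℕ) (x : ℤ) :
    u x - ((c ^ (K : ℤ) : Aˣ) : A) * u (x + K)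
      = ∑ r ∈ Finset.range K, ((c ^ r : Aˣ) : A) * (u (x + r) - (c : A) * u (x + r + 1)) := by
  induction K with
  | zero => simp
  | succ K ih =>
    rw [Finset.sum_range_succ, ← ih]
    have h1 : ((c ^ ((K:ℕ) + 1 : ℤ) : Aˣ) : A) = ((c ^ (K : ℤ) : Aˣ) : A) * (c : A) := by
      rw [← Units.val_mul, ← zpow_add_one]
    have h2 : ((c : A)) ^ (K : ℕ) = ((c ^ (K : ℤ) : Aˣ) : A) := by
      rw [zpow_natCast, Units.val_pow_eq_pow_val]
    have h3 : x + ((K : ℕ) + 1 : ℤ) = x + (K : ℕ) + 1 := by ring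
    push_cast
    push_cast at h1 h3
    rw [h1, h3, h2]
    ring

theorem tele_neg (c : Aˣ) (u : ℤ → A) (K : ℕ) (x : ℤ) :
    u x - ((c ^ (-(K : ℤ)) : Aˣ) : A) * u (x - K)
      = -∑ r ∈ Finset.range K, ((c ^ (-((r : ℤ) + 1)) : Aˣ) : A) *
          (u (x - ((r : ℤ) + 1)) - (c : A) * u (x - ((r : ℤ) + 1) + 1)) := by
  induction K with
  | zero => simp
  | succ K ih =>
    rw [Finset.sum_range_succ, neg_add, ← ih]
    have h1 : ((c ^ (-((K:ℤ) + 1)) : Aˣ) : A) * (c : A) = ((c ^ (-(K:ℤ)) : Aˣ) : A) := by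
      rw [← Units.val_mul, ← zpow_add_one]
      congr 1
      ring
    have h2 : x - ((K:ℤ) + 1) + 1 = x - K := by ring
    have h3 : x - ((K:ℕ) + 1 : ℤ) = x - ((K:ℤ) + 1) := by push_cast; ring
    push_cast
    push_cast at h2 h3
    rw [h2, h3]
    linear_combination (u (x - ((K:ℤ)+1))*0) + (- u (x - (K:ℤ))) * h1

theorem stepk : ∀ (L : List Aˣ) (u : ℤ → A),
    (∀ l : ℤ, ∑ a ∈ Finset.range (L.length + 1),
        (-1 : A) ^ a * el (L.map fun c => Units.val c) a * u (l + a) = 0) →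
    ∀ (k j : ℤ), ∑ a ∈ Finset.range (L.length + 1),
        (-1 : A) ^ a * el (L.map fun c => ((c ^ k : Aˣ) : A)) a * u (j + (a : ℤ) * k) = 0
  | [], u, H, k, j => by
    have h := H j
    simp only [List.length_nil, List.map_nil] at h ⊢
    rw [Finset.sum_range_one] at h ⊢
    simpa using h
  | c :: L, u, H, k, j => by
    -- hypothesis for the reduced sequence
    have Hv : ∀ l : ℤ, ∑ a ∈ Finset.range (L.length + 1),
        (-1 : A) ^ a * el (L.map fun c => Units.val c) a *
          (u (l + a) - (c : A) * u (l + a + 1)) = 0 := by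
      intro l
      have h := H l
      simp only [List.map_cons, List.length_cons] at h
      have key := el_cons_sum (c : A) (L.map fun c => Units.val c) u l 1
      simp only [mul_one, List.length_map] at key
      rw [← key]
      rw [← h]
    have IHv := stepk L (fun x => u x - (c : A) * u (x + 1)) Hv
    simp only [List.map_cons, List.length_cons]
    have key := el_cons_sum ((c ^ k : Aˣ) : A) (L.map fun c => ((c ^ k : Aˣ) : A)) u j k
    simp only [List.length_map] at key
    rw [key]
    rcases k with K | K
    · -- k = (K : ℕ)
      have tpos : ∀ x : ℤ, u x - ((c ^ (K : ℤ) : Aˣ) : A) * u (x + (K : ℤ))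
          = ∑ r ∈ Finset.range K, ((c ^ r : Aˣ) : A) * (u (x + r) - (c : A) * u (x + r + 1)) :=
        tele_pos c u K
      calc ∑ a ∈ Finset.range (L.length + 1),
            (-1 : A) ^ a * el (L.map fun c => ((c ^ (K : ℤ) : Aˣ) : A)) a *
              (u (j + (a : ℤ) * (K : ℤ)) - ((c ^ (K : ℤ) : Aˣ) : A) * u (j + (a : ℤ) * K + K))
          = ∑ a ∈ Finset.range (L.length + 1), ∑ r ∈ Finset.range K,
              ((c ^ r : Aˣ) : A) * ((-1 : A) ^ a * el (L.map fun c => ((c ^ (K : ℤ) : Aˣ) : A)) a *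
                (u ((j + r) + (a : ℤ) * K) - (c : A) * u ((j + r) + (a : ℤ) * K + 1))) := by
            refine Finset.sum_congr rfl fun a _ => ?_
            rw [tpos (j + (a : ℤ) * K), Finset.mul_sum]
            refine Finset.sum_congr rfl fun r _ => ?_
            have e1 : j + (a : ℤ) * K + r = (j + r) + (a : ℤ) * K := by ring
            rw [e1]
            ring
        _ = 0 := by
            rw [Finset.sum_comm]
            refine Finset.sum_eq_zero fun r _ => ?_
            rw [← Finset.mul_sum]
            have := IHv (K : ℤ) (j + r)
            rw [this, mul_zero]
    · -- k = Int.negSucc K = -(K+1)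
      have hK : (Int.negSucc K) = -((K + 1 : ℕ) : ℤ) := by
        simp [Int.negSucc_eq]
      rw [hK]
      have tneg : ∀ x : ℤ, u x - ((c ^ (-((K + 1 : ℕ) : ℤ)) : Aˣ) : A) * u (x - ((K + 1 : ℕ) : ℤ))
          = -∑ r ∈ Finset.range (K + 1), ((c ^ (-((r : ℤ) + 1)) : Aˣ) : A) *
              (u (x - ((r : ℤ) + 1)) - (c : A) * u (x - ((r : ℤ) + 1) + 1)) :=
        tele_neg c u (K + 1)
      calc ∑ a ∈ Finset.range (L.length + 1),
            (-1 : A) ^ a * el (L.map fun c => ((c ^ (-((K + 1 : ℕ) : ℤ)) : Aˣ) : A)) a *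
              (u (j + (a : ℤ) * (-((K + 1 : ℕ) : ℤ)))
                - ((c ^ (-((K + 1 : ℕ) : ℤ)) : Aˣ) : A)
                  * u (j + (a : ℤ) * (-((K + 1 : ℕ) : ℤ)) + (-((K + 1 : ℕ) : ℤ))))
          = ∑ a ∈ Finset.range (L.length + 1), ∑ r ∈ Finset.range (K + 1),
              (-((c ^ (-((r : ℤ) + 1)) : Aˣ) : A)) *
                ((-1 : A) ^ a * el (L.map fun c => ((c ^ (-((K + 1 : ℕ) : ℤ)) : Aˣ) : A)) a *
                  (u ((j - ((r : ℤ) + 1)) + (a : ℤ) * (-((K + 1 : ℕ) : ℤ)))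
                    - (c : A) * u ((j - ((r : ℤ) + 1)) + (a : ℤ) * (-((K + 1 : ℕ) : ℤ)) + 1))) := by
            refine Finset.sum_congr rfl fun a _ => ?_
            have e0 : j + (a : ℤ) * (-((K + 1 : ℕ) : ℤ)) + (-((K + 1 : ℕ) : ℤ))
                = (j + (a : ℤ) * (-((K + 1 : ℕ) : ℤ))) - ((K + 1 : ℕ) : ℤ) := by ring
            rw [e0, tneg (j + (a : ℤ) * (-((K + 1 : ℕ) : ℤ)))]
            rw [mul_neg, Finset.mul_sum, ← Finset.sum_neg_distrib]
            refine Finset.sum_congr rfl fun r _ => ?_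
            have e1 : j + (a : ℤ) * (-((K + 1 : ℕ) : ℤ)) - ((r : ℤ) + 1)
                = (j - ((r : ℤ) + 1)) + (a : ℤ) * (-((K + 1 : ℕ) : ℤ)) := by ring
            rw [e1]
            ring
        _ = 0 := by
            rw [Finset.sum_comm]
            refine Finset.sum_eq_zero fun r _ => ?_
            rw [← Finset.mul_sum]
            have := IHv (-((K + 1 : ℕ) : ℤ)) (j - ((r : ℤ) + 1))
            rw [this, mul_zero]


theorem keyG (n : ℕ) (t : Fin (n + 1) → Aˣ) (k j : ℤ) :
    ∑ a ∈ Finset.range (n + 2),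
      (-1 : A) ^ a * esymm (n + 1) (tk t k) a * chi (n + 1) t (j + (a : ℤ) * k) = 0 := by
  have H : ∀ l : ℤ, ∑ a ∈ Finset.range ((List.ofFn t).length + 1),
      (-1 : A) ^ a * el ((List.ofFn t).map fun c => Units.val c) a * chi (n + 1) t (l + a)
        = 0 := by
    intro l
    have h := lemA n t l
    rw [List.length_ofFn, List.map_ofFn]
    exact h
  have S := stepk (List.ofFn t) (chi (n + 1) t) H k j
  rw [List.length_ofFn, List.map_ofFn] at S
  rw [← S]
  refine Finset.sum_congr rfl fun a _ => ?_
  congr 2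
  rw [esymm_eq_el]
  rfl

end Aux

/-- Remark 4.10 of the paper, alternative expression for the coefficients
of `B`.  For all `n ≥ 0`, `k, j ∈ ℤ` and `0 ≤ l ≤ n`,
`Σ_{i=1}^{n+1-l} (-1)^{i+l+1} χ_{n,ik+j} s_{i+l}(t₁^k,…,t_{n+1}^k)
  = Σ_{α=0}^{l} (-1)^α χ_{n,(α-l)k+j} s_α(t₁^k,…,t_{n+1}^k)`. -/
theorem Bcoeff_alternative {A : Type*} [CommRing A]
    (n : ℕ) (k j : ℤ) (l : ℕ) (hl : l ≤ n) (t : Fin (n + 1) → Aˣ) :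
    ∑ i ∈ Finset.Icc 1 (n + 1 - l),
        (-1 : A) ^ (i + l + 1) * chi (n + 1) t ((i : ℤ) * k + j) * esymm (n + 1) (tk t k) (i + l) =
      ∑ a ∈ Finset.range (l + 1),
        (-1 : A) ^ a * chi (n + 1) t (((a : ℤ) - l) * k + j) * esymm (n + 1) (tk t k) a := by
  have G := keyG n t k (j - (l : ℤ) * k)
  set F : ℕ → A := fun a =>
    (-1 : A) ^ a * esymm (n + 1) (tk t k) a * chi (n + 1) t ((j - (l : ℤ) * k) + (a : ℤ) * k)
    with hF
  rw [← Finset.sum_range_add_sum_Ico F (show l + 1 ≤ n + 2 by omega)] at G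
  have hI : ∑ a ∈ Finset.Ico (l + 1) (n + 2), F a
      = ∑ i ∈ Finset.range (n + 1 - l), F (l + 1 + i) := by
    rw [Finset.sum_Ico_eq_sum_range, show n + 2 - (l + 1) = n + 1 - l from by omega]
  have hL : ∑ i ∈ Finset.Icc 1 (n + 1 - l),
      (-1 : A) ^ (i + l + 1) * chi (n + 1) t ((i : ℤ) * k + j) * esymm (n + 1) (tk t k) (i + l)
        = -∑ i ∈ Finset.range (n + 1 - l), F (l + 1 + i) := by
    rw [← Finset.Ico_add_one_right_eq_Icc, Finset.sum_Ico_eq_sum_range, ← Finset.sum_neg_distrib]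
    refine Finset.sum_congr rfl fun i _ => ?_
    simp only [hF]
    have harg : ((1 + i : ℕ) : ℤ) * k + j = (j - (l : ℤ) * k) + ((l + 1 + i : ℕ) : ℤ) * k := by
      push_cast; ring
    have hidx : 1 + i + l = l + 1 + i := by omega
    have hsign : (-1 : A) ^ (1 + i + l + 1) = -(-1 : A) ^ (l + 1 + i) := by
      rw [show 1 + i + l + 1 = (l + 1 + i) + 1 by omega, pow_succ]
      ring
    rw [harg, hsign, hidx]
    ring
  have hR : ∑ a ∈ Finset.range (l + 1),
      (-1 : A) ^ a * chi (n + 1) t (((a : ℤ) - l) * k + j) * esymm (n + 1) (tk t k) a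
        = ∑ a ∈ Finset.range (l + 1), F a := by
    refine Finset.sum_congr rfl fun a _ => ?_
    simp only [hF]
    have harg : ((a : ℤ) - l) * k + j = (j - (l : ℤ) * k) + (a : ℤ) * k := by ring
    rw [harg]
    ring
  rw [hL, hR, ← hI]
  linear_combination -G
end
end
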